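/- Let G be a generalized Young function satisfying (H1) and (H3), and let u ∈ C²_c(ℝⁿ) with support contained in the ball B_R(0), R > 1. Then for every x ∈ ℝⁿ with |x| ≥ 2R and every s ∈ [1/2, 1), ∫_{ℝⁿ} G(x, x − h, |u(x) − u(x − h)| / |h|^s) |h|^{−n} dh ≤ 2^{n + p⁺} · C₂ · n·ω_n · Rⁿ · (‖u‖_∞^{p⁺} + ‖u‖_∞^{p⁻}) · |x|^{−n − 1/2}, where ω_n is the volume of the unit ball of ℝⁿ and ‖u‖_∞ is the sup norm of u. -/

import Mathlib

open MeasureTheory Real Filter Topology Metric Set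

noncomputable section

/-- Euclidean space `ℝⁿ` with `n = m + 1 ≥ 1`. -/
abbrev Euc (m : ℕ) := EuclideanSpace ℝ (Fin (m + 1))

/-- The last coordinate of a point of `ℝ^{m+1}`. -/
def lastCoord {m : ℕ} (w : Euc m) : ℝ := w (Fin.last m)

/-- The volume of the unit ball of `ℝ^{m+1}`. -/
def unitBallVol (m : ℕ) : ℝ := (volume (ball (0 : Euc m) 1)).toReal

/-- The data of a generalized Young function `G(x,y,t) = ∫₀ᵗ g(x,y,s) ds`, where the
density `g` vanishes at `t = 0`, is positive for `t > 0`, is nondecreasing and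
right-continuous in `t` on `[0,∞)`, and tends to `∞` as `t → ∞`. -/
structure GenYoung (m : ℕ) where
  g : Euc m → Euc m → ℝ → ℝ
  g_nonneg : ∀ x y t, 0 ≤ t → 0 ≤ g x y t
  g_zero : ∀ x y, g x y 0 = 0
  g_pos : ∀ x y t, 0 < t → 0 < g x y t
  g_mono : ∀ x y, MonotoneOn (g x y) (Set.Ici 0)
  g_rightCont : ∀ x y t, 0 ≤ t → ContinuousWithinAt (g x y) (Set.Ici t) t
  g_top : ∀ x y, Tendsto (g x y) atTop atTop

namespace GenYoung

variable {m : ℕ}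

/-- The generalized Young function `G(x,y,t) = ∫₀ᵗ g(x,y,s) ds`. -/
def G (D : GenYoung m) (x y : Euc m) (t : ℝ) : ℝ := ∫ s in (0:ℝ)..t, D.g x y s

/-- Hypothesis (H1): `0 < C₁ ≤ G(x,y,1) ≤ C₂` uniformly in `x, y`. -/
def H1 (D : GenYoung m) (C1 C2 : ℝ) : Prop :=
  0 < C1 ∧ C1 ≤ C2 ∧ ∀ x y : Euc m, C1 ≤ D.G x y 1 ∧ D.G x y 1 ≤ C2

/-- Hypothesis (H2): `y ↦ G(x,y,t)` is continuous. -/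
def H2 (D : GenYoung m) : Prop :=
  ∀ (x : Euc m) (t : ℝ), 0 ≤ t → Continuous fun y => D.G x y t

/-- Hypothesis (H3): `p⁻ ≤ t g(x,y,t) / G(x,y,t) ≤ p⁺` with `1 < p⁻ ≤ p⁺ < ∞`. -/
def H3 (D : GenYoung m) (pm pp : ℝ) : Prop :=
  1 < pm ∧ pm ≤ pp ∧ ∀ (x y : Euc m) (t : ℝ), 0 < t →
    pm ≤ t * D.g x y t / D.G x y t ∧ t * D.g x y t / D.G x y t ≤ pp

/-- The limit function
`H₀(x,t) = ∫₀¹ ∫_{S^{n-1}} G(x,x,t |wₙ| r) dH^{n-1}(w) r⁻¹ dr`, where the sphere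
carries the `(n-1)`-dimensional Hausdorff measure. -/
def H0 (D : GenYoung m) (x : Euc m) (t : ℝ) : ℝ :=
  ∫ r in (0:ℝ)..1,
    (∫ w in sphere (0 : Euc m) 1, D.G x x (t * |lastCoord w| * r) ∂μH[(m:ℝ)]) / r

/-- The modular `𝒥_{s,G}(u) = ∬ G(x,y,|u(x)-u(y)|/|x-y|ˢ) |x-y|⁻ⁿ dx dy`. -/
def J (D : GenYoung m) (s : ℝ) (u : Euc m → ℝ) : ℝ :=
  ∫ q : Euc m × Euc m,
    D.G q.1 q.2 (|u q.1 - u q.2| / ‖q.1 - q.2‖ ^ s) / ‖q.1 - q.2‖ ^ (m + 1)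

end GenYoung

/-!
Since `u` vanishes outside `B_R(0)`, and in particular at `x`, the integrand vanishes unless
`h ∈ B_R(x)`; there `|h| ≥ |x|/2 ≥ R > 1` and the argument of `G` is at most `M |h|^{-s}`.
Condition (H3) says exactly that `t ↦ G(t)/t^{p⁺}` is nonincreasing and `t ↦ G(t)/t^{p⁻}` is
nondecreasing on `(0,∞)`, so together with (H1) it gives `G(t) ≤ C₂ (t^{p⁺} + t^{p⁻})`.
As `s p^± ≥ 1/2`, the integrand is then at most `C₂ (M^{p⁺} + M^{p⁻}) (|x|/2)^{-n-1/2}`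
on a ball of volume `ωₙ Rⁿ`.
-/

theorem antitoneOn_div_rpow_of_mul_deriv_le {F f : ℝ → ℝ} {p : ℝ}
    (hF : ContinuousOn F (Ioi 0))
    (hf : ∀ t > 0, HasDerivWithinAt F (f t) (Ici t) t)
    (hgrowth : ∀ t > 0, t * f t ≤ p * F t) :
    AntitoneOn (fun t => F t / t ^ p) (Ioi 0) := by
  intro a ha b _ hab
  have hpos : ∀ t ∈ Icc a b, 0 < t := fun t ht => lt_of_lt_of_le ha ht.1
  have hpow : ∀ t : ℝ, 0 < t → HasDerivAt (fun t => t ^ p) (p * t ^ (p - 1)) t :=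
    fun t ht => hasDerivAt_rpow_const (Or.inl ht.ne')
  refine image_le_of_deriv_right_le_deriv_boundary (f := fun t => F t / t ^ p) (a := a) (b := b)
    (B := fun _ => F a / a ^ p) (B' := 0)
    (f' := fun t => (f t * t ^ p - F t * (p * t ^ (p - 1))) / (t ^ p) ^ 2)
    ?_ (fun t ht => ?_) le_rfl continuousOn_const
    (fun t _ => hasDerivWithinAt_const _ _ _) (fun t ht => ?_) ⟨hab, le_rfl⟩
  · exact (hF.mono fun t ht => hpos t ht).div
      (continuousOn_id.rpow_const fun t ht => Or.inl (hpos t ht).ne')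
      fun t ht => (rpow_pos_of_pos (hpos t ht) p).ne'
  · have ht := hpos t (Ico_subset_Icc_self ht)
    exact (hf t ht).div (hpow t ht).hasDerivWithinAt (rpow_pos_of_pos ht p).ne'
  · have ht := hpos t (Ico_subset_Icc_self ht)
    have hsplit : t ^ p = t * t ^ (p - 1) := by
      rw [mul_comm, ← rpow_add_one ht.ne', sub_add_cancel]
    apply div_nonpos_of_nonpos_of_nonneg _ (sq_nonneg _)
    rw [hsplit]
    nlinarith [hgrowth t ht, rpow_pos_of_pos ht (p - 1)]

theorem monotoneOn_div_rpow_of_le_mul_deriv {F f : ℝ → ℝ} {p : ℝ}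
    (hF : ContinuousOn F (Ioi 0))
    (hf : ∀ t > 0, HasDerivWithinAt F (f t) (Ici t) t)
    (hgrowth : ∀ t > 0, p * F t ≤ t * f t) :
    MonotoneOn (fun t => F t / t ^ p) (Ioi 0) := by
  have h := antitoneOn_div_rpow_of_mul_deriv_le (p := p) hF.neg (fun t ht => (hf t ht).neg)
    (fun t ht => by simp only [Pi.neg_apply]; linarith [hgrowth t ht])
  intro a ha b hb hab
  simpa only [Pi.neg_apply, neg_div, neg_le_neg_iff] using h ha hb hab

theorem apply_eq_zero_of_tsupport_subset_ball {E F : Type*} [SeminormedAddCommGroup E] [Zero F]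
    [TopologicalSpace F] {u : E → F} {R : ℝ} (hsupp : tsupport u ⊆ ball 0 R) {z : E}
    (hz : R ≤ ‖z‖) : u z = 0 :=
  image_eq_zero_of_notMem_tsupport fun hz' => by
    have := hsupp hz'
    rw [mem_ball_zero_iff] at this
    linarith

theorem volume_ball_toReal {m : ℕ} (x : Euc m) {R : ℝ} (hR : 0 ≤ R) :
    (volume (ball x R)).toReal = R ^ (m + 1) * unitBallVol m := by
  rw [Measure.addHaar_ball volume x hR, finrank_euclideanSpace_fin, ENNReal.toReal_mul,
    ENNReal.toReal_ofReal (by positivity)]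
  rfl

theorem mul_div_two_rpow_le (n : ℕ) {a c p : ℝ} (ha : 0 ≤ a) (hc : 0 ≤ c)
    (hp : 1 / 2 ≤ p) :
    c * (a / 2) ^ (-(n + 1 : ℝ) - 1 / 2)
      ≤ 2 ^ ((n + 1 : ℝ) + p) * (n + 1 : ℝ) * c * a ^ (-(n + 1 : ℝ) - 1 / 2) := by
  have hsplit : (a / 2) ^ (-(n + 1 : ℝ) - 1 / 2)
      = 2 ^ ((n + 1 : ℝ) + 1 / 2) * a ^ (-(n + 1 : ℝ) - 1 / 2) := by
    rw [div_rpow ha zero_le_two, div_eq_mul_inv, ← rpow_neg zero_le_two, mul_comm]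
    ring_nf
  have htwo : (2 : ℝ) ^ ((n + 1 : ℝ) + 1 / 2) ≤ 2 ^ ((n + 1 : ℝ) + p) * (n + 1 : ℝ) :=
    (rpow_le_rpow_of_exponent_le one_le_two (by linarith)).trans
      (le_mul_of_one_le_right (by positivity) (by linarith [n.cast_nonneg (α := ℝ)]))
  rw [hsplit]
  calc c * (2 ^ ((n + 1 : ℝ) + 1 / 2) * a ^ (-(n + 1 : ℝ) - 1 / 2))
      = 2 ^ ((n + 1 : ℝ) + 1 / 2) * (c * a ^ (-(n + 1 : ℝ) - 1 / 2)) := by ring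
    _ ≤ 2 ^ ((n + 1 : ℝ) + p) * (n + 1 : ℝ) * (c * a ^ (-(n + 1 : ℝ) - 1 / 2)) := by gcongr
    _ = _ := by ring

namespace GenYoung

section Basic

variable {m : ℕ} (D : GenYoung m) (x y : Euc m)

theorem intervalIntegrable_g {t : ℝ} (ht : 0 ≤ t) :
    IntervalIntegrable (D.g x y) volume 0 t :=
  ((D.g_mono x y).mono fun _ hs => (uIcc_of_le ht ▸ hs).1).intervalIntegrable

theorem G_zero : D.G x y 0 = 0 := intervalIntegral.integral_same

theorem G_pos {t : ℝ} (ht : 0 < t) : 0 < D.G x y t :=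
  intervalIntegral.intervalIntegral_pos_of_pos_on (D.intervalIntegrable_g x y ht.le)
    (fun s hs => D.g_pos x y s hs.1) ht

theorem G_nonneg {t : ℝ} (ht : 0 ≤ t) : 0 ≤ D.G x y t :=
  intervalIntegral.integral_nonneg ht fun s hs => D.g_nonneg x y s hs.1

theorem G_monotoneOn : MonotoneOn (D.G x y) (Ici 0) := by
  intro a ha b hb hab
  have hsplit : D.G x y b - D.G x y a = ∫ s in a..b, D.g x y s :=
    intervalIntegral.integral_interval_sub_left (D.intervalIntegrable_g x y hb)
      (D.intervalIntegrable_g x y ha)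
  have hnonneg : 0 ≤ ∫ s in a..b, D.g x y s :=
    intervalIntegral.integral_nonneg hab fun s hs => D.g_nonneg x y s (le_trans ha hs.1)
  linarith

theorem continuousOn_G : ContinuousOn (D.G x y) (Ioi 0) := by
  intro t (ht : 0 < t)
  have hT : (0 : ℝ) ≤ t + 1 := by linarith
  have hcont := intervalIntegral.continuousOn_primitive_interval'
    (D.intervalIntegrable_g x y hT) left_mem_uIcc
  rw [uIcc_of_le hT] at hcont
  exact (hcont.continuousAt (Icc_mem_nhds ht (by linarith))).continuousWithinAt

theorem hasDerivWithinAt_G {t : ℝ} (ht : 0 ≤ t) :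
    HasDerivWithinAt (D.G x y) (D.g x y t) (Ici t) t := by
  have hmeas : StronglyMeasurableAtFilter (D.g x y) (𝓝[Ioi t] t) :=
    ⟨Icc t (t + 1), Icc_mem_nhdsGT (by linarith),
      (((D.g_mono x y).mono fun _ hs => le_trans ht hs.1).integrableOn_isCompact
        isCompact_Icc).aestronglyMeasurable⟩
  exact intervalIntegral.integral_hasDerivWithinAt_right (D.intervalIntegrable_g x y ht) hmeas
    ((D.g_rightCont x y t ht).mono Ioi_subset_Ici_self)

end Basic

section Growth

variable {m : ℕ} {D : GenYoung m} {C1 C2 pm pp : ℝ}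

theorem G_le_G_one_mul_rpow_of_one_le (h3 : D.H3 pm pp) (x y : Euc m) {t : ℝ} (ht : 1 ≤ t) :
    D.G x y t ≤ D.G x y 1 * t ^ pp := by
  have hanti := antitoneOn_div_rpow_of_mul_deriv_le (D.continuousOn_G x y)
    (fun t ht => D.hasDerivWithinAt_G x y ht.le)
    (fun t ht => (div_le_iff₀ (D.G_pos x y ht)).1 (h3.2.2 x y t ht).2)
  have h := hanti (mem_Ioi.2 one_pos) (mem_Ioi.2 (by linarith)) ht
  simp only at h
  rwa [one_rpow, div_one, div_le_iff₀ (rpow_pos_of_pos (by linarith) pp)] at h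

theorem G_le_G_one_mul_rpow_of_le_one (h3 : D.H3 pm pp) (x y : Euc m) {t : ℝ} (ht₀ : 0 < t)
    (ht : t ≤ 1) : D.G x y t ≤ D.G x y 1 * t ^ pm := by
  have hmono := monotoneOn_div_rpow_of_le_mul_deriv (D.continuousOn_G x y)
    (fun t ht => D.hasDerivWithinAt_G x y ht.le)
    (fun t ht => (le_div_iff₀ (D.G_pos x y ht)).1 (h3.2.2 x y t ht).1)
  have h := hmono ht₀ (mem_Ioi.2 one_pos) ht
  simp only at h
  rwa [one_rpow, div_one, div_le_iff₀ (rpow_pos_of_pos ht₀ pm)] at h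

theorem G_le_mul_rpow_add_rpow (h1 : D.H1 C1 C2) (h3 : D.H3 pm pp)
    (x y : Euc m) {t : ℝ} (ht : 0 ≤ t) : D.G x y t ≤ C2 * (t ^ pp + t ^ pm) := by
  have hC2 : D.G x y 1 ≤ C2 := (h1.2.2 x y).2
  have hpm : 0 < pm := by linarith [h3.1]
  have hpp : 0 < pp := by linarith [h3.1, h3.2.1]
  rcases ht.eq_or_lt with rfl | ht₀
  · simp [G_zero, zero_rpow hpm.ne', zero_rpow hpp.ne']
  have hG1 := (D.G_pos x y one_pos).le
  have hpm_nonneg := rpow_nonneg ht pm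
  have hpp_nonneg := rpow_nonneg ht pp
  rcases le_total t 1 with ht1 | ht1
  · calc D.G x y t ≤ D.G x y 1 * t ^ pm := G_le_G_one_mul_rpow_of_le_one h3 x y ht₀ ht1
      _ ≤ C2 * (t ^ pp + t ^ pm) := by nlinarith
  · calc D.G x y t ≤ D.G x y 1 * t ^ pp := G_le_G_one_mul_rpow_of_one_le h3 x y ht1
      _ ≤ C2 * (t ^ pp + t ^ pm) := by nlinarith

theorem G_abs_div_rpow_le (h1 : D.H1 C1 C2) (h3 : D.H3 pm pp) (x y : Euc m) {v M r s : ℝ}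
    (hv : |v| ≤ M) (hr : 1 ≤ r) (hs : 1 / 2 ≤ s) :
    D.G x y (|v| / r ^ s) ≤ C2 * (M ^ pp + M ^ pm) * r ^ (-(1 / 2 : ℝ)) := by
  have hM : 0 ≤ M := (abs_nonneg v).trans hv
  have hr₀ : 0 < r := by linarith
  have hrs : 0 < r ^ s := rpow_pos_of_pos hr₀ s
  have hC2 : 0 ≤ C2 := by linarith [h1.1, h1.2.1]
  have hdecay : ∀ p : ℝ, 1 ≤ p → (M / r ^ s) ^ p ≤ M ^ p * r ^ (-(1 / 2 : ℝ)) := by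
    intro p hp
    rw [div_rpow hM hrs.le, ← rpow_mul hr₀.le, div_eq_mul_inv, ← rpow_neg hr₀.le]
    gcongr
    nlinarith
  calc D.G x y (|v| / r ^ s) ≤ D.G x y (M / r ^ s) :=
        D.G_monotoneOn x y (div_nonneg (abs_nonneg v) hrs.le) (div_nonneg hM hrs.le)
          (by gcongr)
    _ ≤ C2 * ((M / r ^ s) ^ pp + (M / r ^ s) ^ pm) :=
        G_le_mul_rpow_add_rpow h1 h3 x y (div_nonneg hM hrs.le)
    _ ≤ C2 * (M ^ pp * r ^ (-(1 / 2 : ℝ)) + M ^ pm * r ^ (-(1 / 2 : ℝ))) := by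
        gcongr
        · exact hdecay pp (by linarith [h3.1, h3.2.1])
        · exact hdecay pm h3.1.le
    _ = C2 * (M ^ pp + M ^ pm) * r ^ (-(1 / 2 : ℝ)) := by ring

theorem farField_integrand_le_indicator (h1 : D.H1 C1 C2) (h3 : D.H3 pm pp) {R : ℝ}
    (hR : 1 < R) {u : Euc m → ℝ} (hsupp : tsupport u ⊆ ball 0 R) {M : ℝ}
    (hM : ∀ z, |u z| ≤ M) {x : Euc m} (hx : 2 * R ≤ ‖x‖) {s : ℝ} (hs : 1 / 2 ≤ s)
    (h : Euc m) :
    D.G x (x - h) (|u x - u (x - h)| / ‖h‖ ^ s) / ‖h‖ ^ (m + 1)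
      ≤ (ball x R).indicator
          (fun _ => C2 * (M ^ pp + M ^ pm) * (‖x‖ / 2) ^ (-(m + 1 : ℝ) - 1 / 2)) h := by
  have hux : u x = 0 := apply_eq_zero_of_tsupport_subset_ball hsupp (by linarith)
  by_cases hh : h ∈ ball x R
  · rw [indicator_of_mem hh, hux, zero_sub, abs_neg]
    have hxh : ‖x - h‖ < R := by rwa [mem_ball_iff_norm'] at hh
    have hh_large : ‖x‖ / 2 ≤ ‖h‖ := by linarith [norm_le_norm_sub_add x h]
    have hh₀ : 0 < ‖h‖ := by linarith
    have hx₀ : 0 < ‖x‖ / 2 := by linarith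
    calc D.G x (x - h) (|u (x - h)| / ‖h‖ ^ s) / ‖h‖ ^ (m + 1)
        ≤ C2 * (M ^ pp + M ^ pm) * ‖h‖ ^ (-(1 / 2 : ℝ)) / ‖h‖ ^ (m + 1) := by
          gcongr
          exact D.G_abs_div_rpow_le h1 h3 x (x - h) (hM _) (by linarith) hs
      _ = C2 * (M ^ pp + M ^ pm) * ‖h‖ ^ (-(m + 1 : ℝ) - 1 / 2) := by
          rw [← rpow_natCast, mul_div_assoc, ← rpow_sub hh₀]
          push_cast
          ring_nf
      _ ≤ C2 * (M ^ pp + M ^ pm) * (‖x‖ / 2) ^ (-(m + 1 : ℝ) - 1 / 2) := by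
          refine mul_le_mul_of_nonneg_left
            (rpow_le_rpow_of_nonpos hx₀ hh_large (by linarith [m.cast_nonneg (α := ℝ)])) ?_
          have hM₀ : 0 ≤ M := (abs_nonneg _).trans (hM 0)
          have hC2 : 0 ≤ C2 := by linarith [h1.1, h1.2.1]
          positivity
  · have hu : u (x - h) = 0 := apply_eq_zero_of_tsupport_subset_ball hsupp (by
      rw [mem_ball_iff_norm'] at hh
      linarith)
    rw [indicator_of_notMem hh, hux, hu, sub_zero, abs_zero, zero_div, G_zero, zero_div]

end Growth

end GenYoung

theorem statement9_general {m : ℕ} (D : GenYoung m) (C1 C2 pm pp : ℝ)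
    (h1 : D.H1 C1 C2) (h3 : D.H3 pm pp) (R : ℝ) (hR : 1 < R)
    (u : Euc m → ℝ)
    (hsupp : tsupport u ⊆ ball (0 : Euc m) R)
    (M : ℝ) (hM : IsLUB (Set.range fun x => |u x|) M)
    (x : Euc m) (hx : 2 * R ≤ ‖x‖) (s : ℝ) (hs : s ∈ Set.Ico (1/2 : ℝ) 1) :
    (∫ h : Euc m, D.G x (x - h) (|u x - u (x - h)| / ‖h‖ ^ s) / ‖h‖ ^ (m + 1))
      ≤ 2 ^ ((m + 1 : ℝ) + pp) * C2 * ((m + 1 : ℝ) * unitBallVol m) * R ^ (m + 1)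
        * (M ^ pp + M ^ pm) * ‖x‖ ^ (-(m + 1 : ℝ) - 1 / 2) := by
  have hMu : ∀ z, |u z| ≤ M := fun z => hM.1 ⟨z, rfl⟩
  have hC : 0 ≤ C2 * (M ^ pp + M ^ pm) := by
    have hM₀ : 0 ≤ M := (abs_nonneg _).trans (hMu 0)
    have hC2 : 0 ≤ C2 := by linarith [h1.1, h1.2.1]
    positivity
  set K := C2 * (M ^ pp + M ^ pm) * (‖x‖ / 2) ^ (-(m + 1 : ℝ) - 1 / 2)
  have hK_int : Integrable ((ball x R).indicator fun _ => K) :=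
    (integrable_indicator_iff measurableSet_ball).2 (integrableOn_const measure_ball_lt_top.ne)
  calc (∫ h : Euc m, D.G x (x - h) (|u x - u (x - h)| / ‖h‖ ^ s) / ‖h‖ ^ (m + 1))
      ≤ ∫ h : Euc m, (ball x R).indicator (fun _ => K) h :=
        integral_mono_of_nonneg
          (ae_of_all _ fun h => div_nonneg (D.G_nonneg _ _ (by positivity)) (by positivity))
          hK_int (ae_of_all _ (GenYoung.farField_integrand_le_indicator h1 h3 hR hsupp hMu hx hs.1))
    _ = R ^ (m + 1) * unitBallVol m * K := by
        rw [integral_indicator_const _ measurableSet_ball, smul_eq_mul, measureReal_def,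
          volume_ball_toReal x (by linarith)]
    _ ≤ R ^ (m + 1) * unitBallVol m * (2 ^ ((m + 1 : ℝ) + pp) * (m + 1 : ℝ)
          * (C2 * (M ^ pp + M ^ pm)) * ‖x‖ ^ (-(m + 1 : ℝ) - 1 / 2)) := by
        have hω : 0 ≤ unitBallVol m := ENNReal.toReal_nonneg
        gcongr
        exact mul_div_two_rpow_le m (norm_nonneg x) hC (by linarith [h3.1, h3.2.1])
    _ = _ := by ring

/-- Far-field estimate: for `u ∈ C²_c(ℝⁿ)` supported in `B_R(0)`, `R > 1`, sup norm
`M`, every `|x| ≥ 2R` and `s ∈ [1/2, 1)`,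
`∫_{ℝⁿ} G(x, x-h, |u(x)-u(x-h)|/|h|ˢ) |h|⁻ⁿ dh
  ≤ 2^{n+p⁺} C₂ n ωₙ Rⁿ (M^{p⁺} + M^{p⁻}) |x|^{-n-1/2}`. -/
theorem statement9 {m : ℕ} (D : GenYoung m) (C1 C2 pm pp : ℝ)
    (h1 : D.H1 C1 C2) (h3 : D.H3 pm pp) (R : ℝ) (hR : 1 < R)
    (u : Euc m → ℝ) (hu : ContDiff ℝ 2 u) (hc : HasCompactSupport u)
    (hsupp : tsupport u ⊆ ball (0 : Euc m) R)
    (M : ℝ) (hM : IsLUB (Set.range fun x => |u x|) M)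
    (x : Euc m) (hx : 2 * R ≤ ‖x‖) (s : ℝ) (hs : s ∈ Set.Ico (1/2 : ℝ) 1) :
    (∫ h : Euc m, D.G x (x - h) (|u x - u (x - h)| / ‖h‖ ^ s) / ‖h‖ ^ (m + 1))
      ≤ 2 ^ ((m + 1 : ℝ) + pp) * C2 * ((m + 1 : ℝ) * unitBallVol m) * R ^ (m + 1)
        * (M ^ pp + M ^ pm) * ‖x‖ ^ (-(m + 1 : ℝ) - 1 / 2) :=
  statement9_general D C1 C2 pm pp h1 h3 R hR u hsupp M hM x hx s hs
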